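/- arXiv:1005.5355 — 4 statements merged into one kernel-verified Lean document; each statement's English description precedes it below -/
import Mathlib

section
/- Let dim V = 3 and F = ½(x₁² + ε x₂²) with ε ≠ 0. Then the compatibility variety of c_F is the union Lie(V, c_F) = Lie₀(V) ∪ span{s², α₃} of a 6-dimensional and a 4-dimensional linear subspace intersecting along the 3-dimensional subspace s². -/
open MvPolynomial

noncomputable section

variable {F : Type*} [Field F]

/-- Levi-Civita symbol on Fin 3 with values in F. -/
def eps (h i j : Fin 3) : F :=
  if (i, j) = (h + 1, h + 2) then 1 else if (i, j) = (h + 2, h + 1) then -1 else 0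

/-- Matrix of the purely non-unimodular 1-form a α₁ + b α₂ + c α₃. -/
def skewMat (a : Fin 3 → F) : Matrix (Fin 3) (Fin 3) F :=
  Matrix.of fun h k => ∑ j, a j * eps j k h

/-- The linear 1-form with coefficient matrix m: its dx_h component. -/
def formOf (m : Matrix (Fin 3) (Fin 3) F) : Fin 3 → MvPolynomial (Fin 3) F :=
  fun h => ∑ k, C (m h k) * X k

/-- Coefficient of the volume form in ω ∧ dη. -/
def wedgeD (ω η : Fin 3 → MvPolynomial (Fin 3) F) : MvPolynomial (Fin 3) F :=
  ω 0 * (pderiv 1 (η 2) - pderiv 2 (η 1))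
    + ω 1 * (pderiv 2 (η 0) - pderiv 0 (η 2))
    + ω 2 * (pderiv 0 (η 1) - pderiv 1 (η 0))

/-- Lie₀(V): the 6-dimensional space of unimodular structures (symmetric matrices,
with zero skew part), inside the space of pairs (symmetric part, skew part). -/
def L0 (F : Type*) [Field F] :
    Submodule F (Matrix (Fin 3) (Fin 3) F × (Fin 3 → F)) :=
  Submodule.span F
    {(Matrix.single 0 0 (1 : F), 0), (Matrix.single 1 1 (1 : F), 0),
      (Matrix.single 2 2 (1 : F), 0),
      (Matrix.single 0 1 (1 : F) + Matrix.single 1 0 (1 : F), 0),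
      (Matrix.single 0 2 (1 : F) + Matrix.single 2 0 (1 : F), 0),
      (Matrix.single 1 2 (1 : F) + Matrix.single 2 1 (1 : F), 0)}

/-- span{s², α₃}: symmetric forms in x₁,x₂ together with α₃. -/
def spanS2A3 (F : Type*) [Field F] :
    Submodule F (Matrix (Fin 3) (Fin 3) F × (Fin 3 → F)) :=
  Submodule.span F
    {(Matrix.single 0 0 (1 : F), 0), (Matrix.single 1 1 (1 : F), 0),
      (Matrix.single 0 1 (1 : F) + Matrix.single 1 0 (1 : F), 0),
      ((0 : Matrix (Fin 3) (Fin 3) F), Pi.single 2 (1 : F))}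

section Aux
open Matrix

lemma std_apply (i j i' j' : Fin 3) (c : F) :
    Matrix.single i j c i' j' = if i = i' ∧ j = j' then c else 0 := by
  split
  · obtain ⟨rfl, rfl⟩ := ‹_›; exact Matrix.single_apply_same ..
  · exact Matrix.single_apply_of_ne i j c i' j' ‹_›

def symmZero (F : Type*) [Field F] :
    Submodule F (Matrix (Fin 3) (Fin 3) F × (Fin 3 → F)) where
  carrier := {p | p.1.IsSymm ∧ p.2 = 0}
  add_mem' := by
    rintro ⟨A, x⟩ ⟨B, y⟩ ⟨hA, hx⟩ ⟨hB, hy⟩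
    exact ⟨hA.add hB, by simp_all⟩
  zero_mem' := ⟨Matrix.isSymm_zero, rfl⟩
  smul_mem' := by
    rintro c ⟨A, x⟩ ⟨hA, hx⟩
    exact ⟨hA.smul c, by simp_all⟩

lemma symm_gen (i j : Fin 3) :
    (Matrix.single i j (1 : F) + Matrix.single j i (1 : F)).IsSymm := by
  show _ᵀ = _
  ext k l
  simp only [Matrix.transpose_apply, Matrix.add_apply, std_apply]
  by_cases h1 : i = k <;> by_cases h2 : j = l <;> by_cases h3 : i = l <;> by_cases h4 : j = k <;>
    simp [h1, h2, h3, h4] <;> simp_all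

lemma symm_diag (i : Fin 3) : (Matrix.single i i (1 : F)).IsSymm := by
  show _ᵀ = _
  ext k l
  simp only [Matrix.transpose_apply, std_apply, and_comm]

lemma mem_L0_iff (G : Matrix (Fin 3) (Fin 3) F) (a : Fin 3 → F) (hG : G.IsSymm) :
    (G, a) ∈ L0 F ↔ a = 0 := by
  constructor
  · intro h
    have hle : L0 F ≤ symmZero F := by
      rw [L0, Submodule.span_le]
      intro p hp
      simp only [Set.mem_insert_iff, Set.mem_singleton_iff] at hp
      rcases hp with h|h|h|h|h|h <;> subst h <;>
        first
          | exact ⟨symm_diag _, rfl⟩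
          | exact ⟨symm_gen _ _, rfl⟩
    exact (hle h).2
  · rintro rfl
    have e10 : G 1 0 = G 0 1 := hG.apply 0 1
    have e20 : G 2 0 = G 0 2 := hG.apply 0 2
    have e21 : G 2 1 = G 1 2 := hG.apply 1 2
    have key : ((G, 0) : Matrix (Fin 3) (Fin 3) F × (Fin 3 → F)) =
        G 0 0 • (Matrix.single 0 0 (1 : F), (0 : Fin 3 → F))
        + G 1 1 • (Matrix.single 1 1 (1 : F), 0)
        + G 2 2 • (Matrix.single 2 2 (1 : F), 0)
        + G 0 1 • (Matrix.single 0 1 (1 : F) + Matrix.single 1 0 (1 : F), 0)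
        + G 0 2 • (Matrix.single 0 2 (1 : F) + Matrix.single 2 0 (1 : F), 0)
        + G 1 2 • (Matrix.single 1 2 (1 : F) + Matrix.single 2 1 (1 : F), 0) := by
      refine Prod.ext ?_ (by simp)
      ext i j
      simp only [Prod.fst_add, Prod.smul_fst, Matrix.add_apply, Matrix.smul_apply, std_apply,
        smul_eq_mul]
      fin_cases i <;> fin_cases j <;> simp [e10, e20, e21]
    rw [key]
    refine add_mem (add_mem (add_mem (add_mem (add_mem ?_ ?_) ?_) ?_) ?_) ?_ <;>
      exact Submodule.smul_mem _ _ (Submodule.subset_span (by simp))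

def sSub (F : Type*) [Field F] :
    Submodule F (Matrix (Fin 3) (Fin 3) F × (Fin 3 → F)) where
  carrier := {p | p.1.IsSymm ∧ p.1 0 2 = 0 ∧ p.1 1 2 = 0 ∧ p.1 2 2 = 0 ∧ p.2 0 = 0 ∧ p.2 1 = 0}
  add_mem' := by
    rintro ⟨A, x⟩ ⟨B, y⟩ ⟨hA, h1, h2, h3, h4, h5⟩ ⟨hB, g1, g2, g3, g4, g5⟩
    refine ⟨hA.add hB, ?_, ?_, ?_, ?_, ?_⟩ <;>
      simp_all [Matrix.add_apply]
  zero_mem' := ⟨Matrix.isSymm_zero, rfl, rfl, rfl, rfl, rfl⟩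
  smul_mem' := by
    rintro c ⟨A, x⟩ ⟨hA, h1, h2, h3, h4, h5⟩
    refine ⟨hA.smul c, ?_, ?_, ?_, ?_, ?_⟩ <;>
      simp_all [Matrix.smul_apply]

lemma spanS2A3_le : spanS2A3 F ≤ sSub F := by
  rw [spanS2A3, Submodule.span_le]
  intro p hp
  simp only [Set.mem_insert_iff, Set.mem_singleton_iff] at hp
  rcases hp with h|h|h|h <;> subst h <;>
    refine ⟨?_, ?_, ?_, ?_, ?_, ?_⟩ <;>
      first
        | exact symm_diag _
        | exact symm_gen _ _
        | exact Matrix.isSymm_zero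
        | simp [std_apply, Matrix.add_apply, Pi.single_apply]

lemma mem_S_iff (G : Matrix (Fin 3) (Fin 3) F) (a : Fin 3 → F) (hG : G.IsSymm) :
    (G, a) ∈ spanS2A3 F ↔ (G 0 2 = 0 ∧ G 1 2 = 0 ∧ G 2 2 = 0 ∧ a 0 = 0 ∧ a 1 = 0) := by
  constructor
  · intro h
    obtain ⟨-, h1, h2, h3, h4, h5⟩ := spanS2A3_le h
    exact ⟨h1, h2, h3, h4, h5⟩
  · rintro ⟨h1, h2, h3, h4, h5⟩
    have e10 : G 1 0 = G 0 1 := hG.apply 0 1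
    have e20 : G 2 0 = G 0 2 := hG.apply 0 2
    have e21 : G 2 1 = G 1 2 := hG.apply 1 2
    have key : ((G, a) : Matrix (Fin 3) (Fin 3) F × (Fin 3 → F)) =
        G 0 0 • (Matrix.single 0 0 (1 : F), (0 : Fin 3 → F))
        + G 1 1 • (Matrix.single 1 1 (1 : F), 0)
        + G 0 1 • (Matrix.single 0 1 (1 : F) + Matrix.single 1 0 (1 : F), 0)
        + a 2 • ((0 : Matrix (Fin 3) (Fin 3) F), (Pi.single 2 (1 : F) : Fin 3 → F)) := by
      refine Prod.ext ?_ ?_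
      · ext i j
        simp only [Prod.fst_add, Prod.smul_fst, Matrix.add_apply, Matrix.smul_apply, std_apply,
          smul_eq_mul]
        fin_cases i <;> fin_cases j <;>
          simp [e10, e20, e21, h1, h2, h3]
      · funext i
        simp only [Prod.snd_add, Prod.smul_snd, Pi.add_apply, Pi.smul_apply, Pi.single_apply,
          smul_eq_mul]
        fin_cases i <;> simp [h4, h5]
    rw [key]
    refine add_mem (add_mem (add_mem ?_ ?_) ?_) ?_ <;>
      exact Submodule.smul_mem _ _ (Submodule.subset_span (by simp))

lemma cons_val_five' {α : Type*} (x0 x1 x2 x3 x4 x5 : α) :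
    ![x0, x1, x2, x3, x4, x5] 5 = x5 := rfl

def v6 (F : Type*) [Field F] : Fin 6 → Matrix (Fin 3) (Fin 3) F × (Fin 3 → F) :=
  ![(Matrix.single 0 0 (1 : F), 0), (Matrix.single 1 1 (1 : F), 0),
    (Matrix.single 2 2 (1 : F), 0),
    (Matrix.single 0 1 (1 : F) + Matrix.single 1 0 (1 : F), 0),
    (Matrix.single 0 2 (1 : F) + Matrix.single 2 0 (1 : F), 0),
    (Matrix.single 1 2 (1 : F) + Matrix.single 2 1 (1 : F), 0)]

lemma range_v6 : Set.range (v6 F) =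
    {(Matrix.single 0 0 (1 : F), 0), (Matrix.single 1 1 (1 : F), 0),
      (Matrix.single 2 2 (1 : F), 0),
      (Matrix.single 0 1 (1 : F) + Matrix.single 1 0 (1 : F), 0),
      (Matrix.single 0 2 (1 : F) + Matrix.single 2 0 (1 : F), 0),
      (Matrix.single 1 2 (1 : F) + Matrix.single 2 1 (1 : F), 0)} := by
  ext x
  simp only [v6, Matrix.range_cons, Matrix.range_empty, Set.mem_insert_iff,
    Set.mem_singleton_iff, Set.mem_union, Set.union_empty]
  try tauto

lemma indep_v6 : LinearIndependent F (v6 F) := by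
  rw [Fintype.linearIndependent_iff]
  intro g h
  have key : ∀ i j : Fin 3,
      (∑ k, g k • v6 F k).1 i j = (0 : Matrix (Fin 3) (Fin 3) F × (Fin 3 → F)).1 i j := by
    intro i j; rw [h]
  intro i
  fin_cases i
  · have := key 0 0
    simpa [Fin.sum_univ_six, v6, cons_val_five', std_apply] using this
  · have := key 1 1
    simpa [Fin.sum_univ_six, v6, cons_val_five', std_apply] using this
  · have := key 2 2
    simpa [Fin.sum_univ_six, v6, cons_val_five', std_apply] using this
  · have := key 0 1
    simpa [Fin.sum_univ_six, v6, cons_val_five', std_apply] using this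
  · have := key 0 2
    simpa [Fin.sum_univ_six, v6, cons_val_five', std_apply] using this
  · have := key 1 2
    simpa [Fin.sum_univ_six, v6, cons_val_five', std_apply] using this

lemma finrank_L0 : Module.finrank F (L0 F) = 6 := by
  have h := finrank_span_eq_card (R := F) indep_v6
  rw [range_v6] at h
  unfold L0
  rw [h]
  simp

lemma L0_le_symmZero : L0 F ≤ symmZero F := by
  rw [L0, Submodule.span_le]
  intro p hp
  simp only [Set.mem_insert_iff, Set.mem_singleton_iff] at hp
  rcases hp with h|h|h|h|h|h <;> subst h <;>
    first
      | exact ⟨symm_diag _, rfl⟩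
      | exact ⟨symm_gen _ _, rfl⟩

def v4 (F : Type*) [Field F] : Fin 4 → Matrix (Fin 3) (Fin 3) F × (Fin 3 → F) :=
  ![(Matrix.single 0 0 (1 : F), 0), (Matrix.single 1 1 (1 : F), 0),
    (Matrix.single 0 1 (1 : F) + Matrix.single 1 0 (1 : F), 0),
    ((0 : Matrix (Fin 3) (Fin 3) F), Pi.single 2 (1 : F))]

lemma range_v4 : Set.range (v4 F) =
    {(Matrix.single 0 0 (1 : F), 0), (Matrix.single 1 1 (1 : F), 0),
      (Matrix.single 0 1 (1 : F) + Matrix.single 1 0 (1 : F), 0),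
      ((0 : Matrix (Fin 3) (Fin 3) F), Pi.single 2 (1 : F))} := by
  ext x
  simp only [v4, Matrix.range_cons, Matrix.range_empty, Set.mem_insert_iff,
    Set.mem_singleton_iff, Set.mem_union, Set.union_empty]
  try tauto

lemma indep_v4 : LinearIndependent F (v4 F) := by
  rw [Fintype.linearIndependent_iff]
  intro g h
  have key1 : ∀ i j : Fin 3,
      (∑ k, g k • v4 F k).1 i j = (0 : Matrix (Fin 3) (Fin 3) F × (Fin 3 → F)).1 i j := by
    intro i j; rw [h]
  have key2 : (∑ k, g k • v4 F k).2 2 = (0 : Matrix (Fin 3) (Fin 3) F × (Fin 3 → F)).2 2 := by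
    rw [h]
  intro i
  fin_cases i
  · have := key1 0 0
    simpa [Fin.sum_univ_four, v4, std_apply] using this
  · have := key1 1 1
    simpa [Fin.sum_univ_four, v4, std_apply] using this
  · have := key1 0 1
    simpa [Fin.sum_univ_four, v4, std_apply] using this
  · simpa [Fin.sum_univ_four, v4, std_apply] using key2

lemma finrank_spanS2A3 : Module.finrank F (spanS2A3 F) = 4 := by
  have h := finrank_span_eq_card (R := F) indep_v4
  rw [range_v4] at h
  unfold spanS2A3
  rw [h]
  simp

def v3 (F : Type*) [Field F] : Fin 3 → Matrix (Fin 3) (Fin 3) F × (Fin 3 → F) :=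
  ![(Matrix.single 0 0 (1 : F), 0), (Matrix.single 1 1 (1 : F), 0),
    (Matrix.single 0 1 (1 : F) + Matrix.single 1 0 (1 : F), 0)]

lemma indep_v3 : LinearIndependent F (v3 F) := by
  rw [Fintype.linearIndependent_iff]
  intro g h
  have key1 : ∀ i j : Fin 3,
      (∑ k, g k • v3 F k).1 i j = (0 : Matrix (Fin 3) (Fin 3) F × (Fin 3 → F)).1 i j := by
    intro i j; rw [h]
  intro i
  fin_cases i
  · have := key1 0 0
    simpa [Fin.sum_univ_three, v3, std_apply] using this
  · have := key1 1 1
    simpa [Fin.sum_univ_three, v3, std_apply] using this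
  · have := key1 0 1
    simpa [Fin.sum_univ_three, v3, std_apply] using this

lemma inf_eq : (L0 F ⊓ spanS2A3 F : Submodule F _) = Submodule.span F (Set.range (v3 F)) := by
  apply le_antisymm
  · rintro ⟨G, a⟩ ⟨hx0, hxS⟩
    obtain ⟨hsymm, ha⟩ := L0_le_symmZero hx0
    obtain ⟨-, h1, h2, h3, -, -⟩ := spanS2A3_le hxS
    have e10 : G 1 0 = G 0 1 := hsymm.apply 0 1
    have e20 : G 2 0 = G 0 2 := hsymm.apply 0 2
    have e21 : G 2 1 = G 1 2 := hsymm.apply 1 2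
    simp only at h1 h2 h3 ha
    have key : ((G, a) : Matrix (Fin 3) (Fin 3) F × (Fin 3 → F)) =
        G 0 0 • v3 F 0 + G 1 1 • v3 F 1 + G 0 1 • v3 F 2 := by
      refine Prod.ext ?_ (by simp [v3, ha])
      ext i j
      simp only [v3, Prod.fst_add, Prod.smul_fst, Matrix.add_apply, Matrix.smul_apply, std_apply,
        smul_eq_mul, Matrix.cons_val_zero, Matrix.cons_val_one, Matrix.cons_val_two,
        Matrix.head_cons, Matrix.vecTail, Matrix.vecHead]
      fin_cases i <;> fin_cases j <;> simp [e10, e20, e21, h1, h2, h3]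
    rw [key]
    refine add_mem (add_mem ?_ ?_) ?_ <;>
      exact Submodule.smul_mem _ _ (Submodule.subset_span ⟨_, rfl⟩)
  · rw [Submodule.span_le]
    rintro x ⟨i, rfl⟩
    fin_cases i <;>
      exact ⟨Submodule.subset_span (by simp [v3]), Submodule.subset_span (by simp [v3])⟩

lemma finrank_inf : Module.finrank F (L0 F ⊓ spanS2A3 F : Submodule F _) = 3 := by
  have h := finrank_span_eq_card (R := F) indep_v3
  rw [inf_eq, h]
  simp

lemma skew_entries (a : Fin 3 → F) :
    skewMat a = Matrix.of ![![0, -a 2, a 1], ![a 2, 0, -a 0], ![-a 1, a 0, 0]] := by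
  ext h k
  fin_cases h <;> fin_cases k <;>
    simp [skewMat, eps, Fin.sum_univ_three, Prod.ext_iff, Fin.reduceAdd, Fin.reduceEq]

lemma wedgeD_eq (m m' : Matrix (Fin 3) (Fin 3) F) :
    wedgeD (formOf m) (formOf m') =
      C ((m 0 0)*(m' 2 1 - m' 1 2) + (m 1 0)*(m' 0 2 - m' 2 0) + (m 2 0)*(m' 1 0 - m' 0 1)) * X 0
    + C ((m 0 1)*(m' 2 1 - m' 1 2) + (m 1 1)*(m' 0 2 - m' 2 0) + (m 2 1)*(m' 1 0 - m' 0 1)) * X 1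
    + C ((m 0 2)*(m' 2 1 - m' 1 2) + (m 1 2)*(m' 0 2 - m' 2 0) + (m 2 2)*(m' 1 0 - m' 0 1)) * X 2 := by
  simp only [wedgeD, formOf, Fin.sum_univ_three, _root_.map_add, pderiv_C_mul, pderiv_X,
    Pi.single_apply, _root_.map_sub, _root_.map_mul, Fin.reduceEq, if_true, if_false, reduceIte]
  ring

lemma lin_add (c0 c1 c2 d0 d1 d2 : F) :
    (C c0 * X 0 + C c1 * X 1 + C c2 * X 2) + (C d0 * X 0 + C d1 * X 1 + C d2 * X 2)
      = C (c0 + d0) * X 0 + C (c1 + d1) * X 1 + (C (c2 + d2) * X 2 : MvPolynomial (Fin 3) F) := by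
  rw [_root_.map_add, _root_.map_add, _root_.map_add]; ring

lemma lin_eq_zero (c0 c1 c2 : F) :
    (C c0 * X 0 + C c1 * X 1 + C c2 * X 2 : MvPolynomial (Fin 3) F) = 0 ↔
      c0 = 0 ∧ c1 = 0 ∧ c2 = 0 := by
  constructor
  · intro h
    refine ⟨?_, ?_, ?_⟩
    · have := congrArg (coeff (Finsupp.single 0 1)) h
      simpa [coeff_X', Finsupp.single_eq_single_iff] using this
    · have := congrArg (coeff (Finsupp.single 1 1)) h
      simpa [coeff_X', Finsupp.single_eq_single_iff] using this
    · have := congrArg (coeff (Finsupp.single 2 1)) h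
      simpa [coeff_X', Finsupp.single_eq_single_iff] using this
  · rintro ⟨h0, h1, h2⟩; simp [h0, h1, h2]

lemma main_iff (hchar : (2 : F) ≠ 0) (ε : F) (hε : ε ≠ 0)
    (G : Matrix (Fin 3) (Fin 3) F) (a : Fin 3 → F) (hG : G.IsSymm) :
    ((wedgeD (formOf (G + skewMat a)) (formOf (G + skewMat a)) = 0 ∧
        wedgeD (formOf (Matrix.diagonal ![1, ε, 0])) (formOf (G + skewMat a))
          + wedgeD (formOf (G + skewMat a)) (formOf (Matrix.diagonal ![1, ε, 0])) = 0)
      ↔ ((G, a) ∈ L0 F ∨ (G, a) ∈ spanS2A3 F)) := by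
  have e10 : G 1 0 = G 0 1 := hG.apply 0 1
  have e20 : G 2 0 = G 0 2 := hG.apply 0 2
  have e21 : G 2 1 = G 1 2 := hG.apply 1 2
  have hsk := skew_entries a
  rw [mem_L0_iff G a hG, mem_S_iff G a hG]
  rw [wedgeD_eq, wedgeD_eq, wedgeD_eq, lin_add, lin_eq_zero, lin_eq_zero]
  have haz : a = 0 ↔ a 0 = 0 ∧ a 1 = 0 ∧ a 2 = 0 := by
    constructor
    · intro h; simp [h]
    · rintro ⟨h0, h1, h2⟩; funext i; fin_cases i <;> assumption
  rw [haz]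
  simp only [hsk, Matrix.add_apply, Matrix.of_apply, Matrix.cons_val_zero, Matrix.cons_val_one,
    Matrix.cons_val_two, Matrix.head_cons, Matrix.vecHead, Matrix.vecTail,
    Matrix.diagonal_apply, Fin.reduceEq, if_true, if_false, reduceIte, Function.comp_apply,
    Fin.succ_zero_eq_one, Fin.succ_one_eq_two, e10, e20, e21]
  constructor
  · rintro ⟨⟨c0, c1, c2⟩, d0, d1, d2⟩
    have ha0 : a 0 = 0 := by
      have h2 : 2 * a 0 = 0 := by linear_combination d0
      exact (mul_eq_zero.1 h2).resolve_left hchar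
    have ha1 : a 1 = 0 := by
      have h2 : 2 * (ε * a 1) = 0 := by linear_combination d1
      exact (mul_eq_zero.1 ((mul_eq_zero.1 h2).resolve_left hchar)).resolve_left hε
    by_cases ha2 : a 2 = 0
    · exact Or.inl ⟨ha0, ha1, ha2⟩
    · simp only [ha0, ha1] at c0 c1 c2
      refine Or.inr ⟨?_, ?_, ?_, ha0, ha1⟩
      · have h2 : 2 * (a 2 * G 0 2) = 0 := by linear_combination c0
        exact (mul_eq_zero.1 ((mul_eq_zero.1 h2).resolve_left hchar)).resolve_left ha2
      · have h2 : 2 * (a 2 * G 1 2) = 0 := by linear_combination c1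
        exact (mul_eq_zero.1 ((mul_eq_zero.1 h2).resolve_left hchar)).resolve_left ha2
      · have h2 : 2 * (a 2 * G 2 2) = 0 := by linear_combination c2
        exact (mul_eq_zero.1 ((mul_eq_zero.1 h2).resolve_left hchar)).resolve_left ha2
  · rintro (⟨h0, h1, h2⟩ | ⟨h1, h2, h3, h4, h5⟩)
    · refine ⟨⟨?_, ?_, ?_⟩, ?_, ?_, ?_⟩ <;> simp only [h0, h1, h2] <;> ring
    · refine ⟨⟨?_, ?_, ?_⟩, ?_, ?_, ?_⟩ <;> simp only [h1, h2, h3, h4, h5] <;> ring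

end Aux

/-- for F = ½(x₁² + εx₂²), ε ≠ 0 (so dF has matrix diag(1,ε,0)), the
compatibility variety Lie(V, c_F) is the union Lie₀(V) ∪ span{s², α₃} of a
6-dimensional and a 4-dimensional subspace meeting along the 3-dimensional s²:
a structure β = dG + α (G symmetric, α = skew part with vector a) satisfies
β∧dβ = 0 and is compatible with dF iff (G,a) lies in Lie₀(V) or in span{s²,α₃}. -/
theorem stmt12 (hchar : (2 : F) ≠ 0) (ε : F) (hε : ε ≠ 0) :
    (∀ (G : Matrix (Fin 3) (Fin 3) F) (a : Fin 3 → F), G.IsSymm →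
      ((wedgeD (formOf (G + skewMat a)) (formOf (G + skewMat a)) = 0 ∧
          wedgeD (formOf (Matrix.diagonal ![1, ε, 0])) (formOf (G + skewMat a))
            + wedgeD (formOf (G + skewMat a)) (formOf (Matrix.diagonal ![1, ε, 0])) = 0)
        ↔ ((G, a) ∈ L0 F ∨ (G, a) ∈ spanS2A3 F))) ∧
    Module.finrank F (L0 F) = 6 ∧
    Module.finrank F (spanS2A3 F) = 4 ∧
    Module.finrank F (L0 F ⊓ spanS2A3 F : Submodule F _) = 3 := by
  exact ⟨fun G a hG => main_iff hchar ε hε G a hG, finrank_L0, finrank_spanS2A3, finrank_inf⟩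

end
end

section
/- Let dim V = 3 and α₃ = x₁dx₂ − x₂dx₁. An endomorphism φ ∈ End(V) satisfies L_{X_φ}(α₃) = 0 if and only if X_φ = (a x₁ + b x₂)∂₁ + (c x₁ − a x₂)∂₂ + (d x₁ + e x₂ + f x₃)∂₃ for some scalars a,…,f; in particular dim sym(α₃) = 6. Explicitly, L_{X_φ}(α₃) = −φ₁³ α₁ − φ₂³ α₂ + (φ₁¹ + φ₂²) α₃. -/
noncomputable section

variable {F : Type*} [Field F]

/-- The Lie-derivative operator φ ↦ L_{X_φ}(ω_M) = Mφ + φᵀM on linear 1-forms with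
coefficient matrix M, as a linear map in φ. -/
def symL (M : Matrix (Fin 3) (Fin 3) F) :
    Matrix (Fin 3) (Fin 3) F →ₗ[F] Matrix (Fin 3) (Fin 3) F where
  toFun φ := M * φ + φ.transpose * M
  map_add' x y := by
    simp [Matrix.mul_add, Matrix.add_mul, Matrix.transpose_add]; abel
  map_smul' r x := by
    simp [Matrix.mul_smul, Matrix.smul_mul, Matrix.transpose_smul]

lemma part1 (φ : Matrix (Fin 3) (Fin 3) F) :
      symL (skewMat (Pi.single 2 (1 : F))) φ
        = (-(φ 0 2)) • skewMat (Pi.single 0 (1 : F))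
          + (-(φ 1 2)) • skewMat (Pi.single 1 (1 : F))
          + (φ 0 0 + φ 1 1) • skewMat (Pi.single 2 (1 : F)) := by
  ext h k
  fin_cases h <;> fin_cases k <;>
    simp [symL, skewMat, eps, Matrix.mul_apply, Fin.sum_univ_three, Pi.single_apply]

/-- coefficient map -/
def cmap : Matrix (Fin 3) (Fin 3) F →ₗ[F] (Fin 3 → F) where
  toFun φ := ![-(φ 0 2), -(φ 1 2), φ 0 0 + φ 1 1]
  map_add' x y := by funext i; fin_cases i <;> simp <;> ring
  map_smul' r x := by funext i; fin_cases i <;> simp <;> ring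

lemma ker_eq_ker : LinearMap.ker (symL (skewMat (Pi.single 2 (1 : F))))
    = LinearMap.ker (cmap (F := F)) := by
  ext φ
  simp only [LinearMap.mem_ker]
  constructor
  · intro h
    rw [part1] at h
    have e0 := congrFun (congrFun h 2) 1
    have e1 := congrFun (congrFun h 0) 2
    have e2 := congrFun (congrFun h 1) 0
    simp [skewMat, eps, Fin.sum_univ_three, Pi.single_apply] at e0 e1 e2
    funext i
    fin_cases i <;> simp [cmap] <;> [exact e0; exact e1; exact e2]
  · intro h
    rw [part1]
    have h0 : -(φ 0 2) = 0 := congrFun h 0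
    have h1 : -(φ 1 2) = 0 := congrFun h 1
    have h2 : φ 0 0 + φ 1 1 = 0 := congrFun h 2
    rw [h0, h1, h2]
    simp

lemma cmap_surj : Function.Surjective (cmap (F := F)) := by
  intro v
  refine ⟨!![v 2, 0, -v 0; 0, 0, -v 1; 0, 0, 0], ?_⟩
  funext i; fin_cases i <;> simp [cmap]

/-- for dim V = 3 and α₃ = x₁dx₂ − x₂dx₁,
L_{X_φ}(α₃) = −φ₁³ α₁ − φ₂³ α₂ + (φ₁¹ + φ₂²) α₃ for every endomorphism φ; hence
L_{X_φ}(α₃) = 0 iff X_φ = (ax₁ + bx₂)∂₁ + (cx₁ − ax₂)∂₂ + (dx₁ + ex₂ + fx₃)∂₃,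
and dim sym(α₃) = 6. -/
theorem stmt15 (hchar : (2 : F) ≠ 0) :
    (∀ φ : Matrix (Fin 3) (Fin 3) F,
      symL (skewMat (Pi.single 2 (1 : F))) φ
        = (-(φ 0 2)) • skewMat (Pi.single 0 (1 : F))
          + (-(φ 1 2)) • skewMat (Pi.single 1 (1 : F))
          + (φ 0 0 + φ 1 1) • skewMat (Pi.single 2 (1 : F))) ∧
    (∀ φ : Matrix (Fin 3) (Fin 3) F,
      symL (skewMat (Pi.single 2 (1 : F))) φ = 0
        ↔ ∃ a b c d e f : F, φ = !![a, b, 0; c, -a, 0; d, e, f]) ∧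
    Module.finrank F (LinearMap.ker (symL (skewMat (Pi.single 2 (1 : F))))) = 6 := by
  refine ⟨part1, fun φ => ?_, ?_⟩
  · constructor
    · intro h
      have hm : φ ∈ LinearMap.ker (cmap (F := F)) := by
        rw [← ker_eq_ker]; exact h
      rw [LinearMap.mem_ker] at hm
      have h0 : -(φ 0 2) = 0 := congrFun hm 0
      have h1 : -(φ 1 2) = 0 := congrFun hm 1
      have h2 : φ 0 0 + φ 1 1 = 0 := congrFun hm 2
      refine ⟨φ 0 0, φ 0 1, φ 1 0, φ 2 0, φ 2 1, φ 2 2, ?_⟩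
      ext i j
      fin_cases i <;> fin_cases j <;>
        simp_all <;> linear_combination h2
    · rintro ⟨a, b, c, d, e, f, rfl⟩
      rw [part1]
      simp
  · have hk : LinearMap.ker (symL (skewMat (Pi.single 2 (1 : F))))
        = LinearMap.ker (cmap (F := F)) := ker_eq_ker
    rw [hk]
    have hr := LinearMap.finrank_range_add_finrank_ker (cmap (F := F))
    rw [LinearMap.range_eq_top.mpr cmap_surj] at hr
    simp [Module.finrank_matrix] at hr
    omega


end
end

section
/- Let dim V = 3 and F = ½x₁². The space Z_N²(dF) = {α ∈ N : dF ∧ α = 0} is 2-dimensional, spanned by α₂ and α₃, and every nonzero element aα₂ + bα₃ can be mapped to α₃ by an element of GL(V) preserving ½d(x₁²) (namely, an automorphism fixing x₁ and sending bx₂ − ax₃ to x₂). Hence the orbit space Z_N²(dF)/Stab(dF) consists of exactly two orbits, one of which is {0}. -/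
open MvPolynomial

noncomputable section

variable {F : Type*} [Field F]

/-- The linear bivector dual to the linear 1-form with matrix m. -/
def biv (m : Matrix (Fin 3) (Fin 3) F) : Fin 3 → Fin 3 → MvPolynomial (Fin 3) F :=
  fun i j => ∑ h, ∑ k, C (eps h i j * m h k) * X k

/-- The ξ-coefficient of the Schouten bracket of two bivector fields on F³. -/
def sch3 (P Q : Fin 3 → Fin 3 → MvPolynomial (Fin 3) F) : MvPolynomial (Fin 3) F :=
  ∑ l, (P l 0 * pderiv l (Q 1 2) + P l 1 * pderiv l (Q 2 0) + P l 2 * pderiv l (Q 0 1)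
      + Q l 0 * pderiv l (P 1 2) + Q l 1 * pderiv l (P 2 0) + Q l 2 * pderiv l (P 0 1))

/-- The (twisted) action of ψ ∈ GL(V) on linear 1-forms/bilinear forms:
ψ · m = det ψ • (ψᵀ m ψ), so that α_{ψ(c)} = ψ*(α_c) · det ψ. -/
def act (ψ m : Matrix (Fin 3) (Fin 3) F) : Matrix (Fin 3) (Fin 3) F :=
  ψ.det • (ψ.transpose * m * ψ)

/-- The Schouten bracket coefficient computes to 2·v₀·x₀. -/
lemma sch3_eq (v : Fin 3 → F) :
    sch3 (biv (Matrix.single 0 0 (1 : F))) (biv (skewMat v))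
      = C 2 * C (v 0) * X 0 := by
  simp [sch3, biv, skewMat, eps, Fin.sum_univ_three, Matrix.single,
    Matrix.of_apply, map_add, map_mul, mul_comm]
  rw [map_ofNat]; ring

/-- Key lemma: SL₂-block matrices stabilize dF and act on Z²_N(dF) as expected. -/
lemma key (p q r s : F) (hd : p * s - q * r = 1) (v w : Fin 3 → F)
    (hv : v 0 = 0) (hw : w 0 = 0)
    (h1 : s * v 1 - q * v 2 = w 1) (h2 : p * v 2 - r * v 1 = w 2) :
    ∃ ψ : Matrix (Fin 3) (Fin 3) F, IsUnit ψ.det ∧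
      act ψ (Matrix.single 0 0 (1 : F)) = Matrix.single 0 0 (1 : F) ∧
      act ψ (skewMat v) = skewMat w := by
  refine ⟨!![1,0,0;0,p,q;0,r,s], ?_, ?_, ?_⟩
  · have : (!![1,0,0;0,p,q;0,r,s] : Matrix (Fin 3) (Fin 3) F).det = 1 := by
      simp [Matrix.det_fin_three]; linear_combination hd
    rw [this]; exact isUnit_one
  · ext i j
    fin_cases i <;> fin_cases j <;>
      simp [act, Matrix.det_fin_three, Matrix.mul_apply, Fin.sum_univ_three,
        Matrix.single] <;> linear_combination hd
  · ext i j
    fin_cases i <;> fin_cases j <;>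
      simp [act, Matrix.det_fin_three, Matrix.mul_apply, Fin.sum_univ_three,
        Matrix.transpose_apply, Matrix.vecHead, Matrix.vecTail, skewMat, eps, hv, hw]
    all_goals rw [hd, one_mul]
    all_goals first
      | linear_combination h1 | linear_combination -h1
      | linear_combination h2 | linear_combination -h2

/-- for F = ½x₁² (matrix E₁₁): (i) a purely non-unimodular form
α = aα₁+bα₂+cα₃ lies in Z_N²(dF), i.e. [c_F, c_α] = 0, iff a = 0 — so Z_N²(dF) is
spanned by α₂, α₃; (ii) any two nonzero elements of Z_N²(dF) (in particular any
nonzero aα₂ + bα₃ and α₃) are related by an element of GL(V) stabilizing dF; hence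
Z_N²(dF)/Stab(dF) consists of exactly two orbits, one of which is {0}. -/
theorem stmt16 (hchar : (2 : F) ≠ 0) :
    (∀ v : Fin 3 → F,
      sch3 (biv (Matrix.single 0 0 (1 : F))) (biv (skewMat v)) = 0 ↔ v 0 = 0) ∧
    (∀ v w : Fin 3 → F, v 0 = 0 → w 0 = 0 → v ≠ 0 → w ≠ 0 →
      ∃ ψ : Matrix (Fin 3) (Fin 3) F, IsUnit ψ.det ∧
        act ψ (Matrix.single 0 0 (1 : F)) = Matrix.single 0 0 (1 : F) ∧
        act ψ (skewMat v) = skewMat w) := by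
  constructor
  · intro v
    rw [sch3_eq]
    constructor
    · intro h
      rcases mul_eq_zero.1 h with h' | hx
      · rcases mul_eq_zero.1 h' with h2 | h0
        · exact absurd (C_eq_zero.mp h2) hchar
        · exact C_eq_zero.mp h0
      · exact absurd hx (X_ne_zero 0)
    · intro h; rw [h]; simp
  · intro v w hv hw hvne hwne
    -- extract nonzero coordinates
    have hv12 : v 1 ≠ 0 ∨ v 2 ≠ 0 := by
      by_contra h
      push_neg at h
      exact hvne (funext fun i => by fin_cases i <;> simp [hv, h.1, h.2])
    have hw12 : w 1 ≠ 0 ∨ w 2 ≠ 0 := by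
      by_contra h
      push_neg at h
      exact hwne (funext fun i => by fin_cases i <;> simp [hw, h.1, h.2])
    by_cases hb : v 1 ≠ 0
    · by_cases hb' : w 1 ≠ 0
      · -- p = v1/w1, q = 0, r = v2/w1 - w2/v1, s = w1/v1
        exact key (v 1 / w 1) 0 (v 2 / w 1 - w 2 / v 1) (w 1 / v 1) (by field_simp; ring)
          v w hv hw (by field_simp; ring) (by field_simp; ring)
      · push_neg at hb'
        have hc' : w 2 ≠ 0 := by tauto
        -- p = 0, q = v1/w2, r = -w2/v1, s = v2/w2
        exact key 0 (v 1 / w 2) (-(w 2 / v 1)) (v 2 / w 2) (by field_simp; ring)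
          v w hv hw (by rw [hb']; field_simp; ring) (by field_simp; ring)
    · push_neg at hb
      have hc : v 2 ≠ 0 := by tauto
      by_cases hb' : w 1 ≠ 0
      · -- p = w2/v2, q = -w1/v2, r = v2/w1, s = 0
        exact key (w 2 / v 2) (-(w 1 / v 2)) (v 2 / w 1) 0 (by field_simp; ring)
          v w hv hw (by rw [hb]; field_simp; ring) (by rw [hb]; field_simp; ring)
      · push_neg at hb'
        have hc' : w 2 ≠ 0 := by tauto
        -- p = w2/v2, q = 0, r = 0, s = v2/w2
        exact key (w 2 / v 2) 0 0 (v 2 / w 2) (by field_simp; ring)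
          v w hv hw (by rw [hb, hb']; ring) (by field_simp; ring)

end
end

section
/- Let dim V = 3 and c = c_{½(λx₁² + μx₂²)} + c_{α₃} be a non-unimodular Lie structure (any non-unimodular 3-dimensional Lie structure is equivalent to one of this form). Then a general structure c_F + c_α with F = ½(ax₁² + bx₂² + cx₃²) + ex₂x₃ + fx₁x₃ + gx₁x₂ and α = kα₁ + lα₂ + mα₃ is a 2-cocycle for c (i.e., [c, c_F + c_α] = 0 in the Schouten bracket) if and only if f + kλ = 0, e + lμ = 0, and c = 0. Consequently dim Z²(c) = 6. -/
open MvPolynomial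

noncomputable section

variable {F : Type*} [Field F]

@[simp] lemma eps_000 : eps (0:Fin 3) 0 0 = (0:F) := rfl
@[simp] lemma eps_001 : eps (0:Fin 3) 0 1 = (0:F) := rfl
@[simp] lemma eps_002 : eps (0:Fin 3) 0 2 = (0:F) := rfl
@[simp] lemma eps_010 : eps (0:Fin 3) 1 0 = (0:F) := rfl
@[simp] lemma eps_011 : eps (0:Fin 3) 1 1 = (0:F) := rfl
@[simp] lemma eps_012 : eps (0:Fin 3) 1 2 = (1:F) := rfl
@[simp] lemma eps_020 : eps (0:Fin 3) 2 0 = (0:F) := rfl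
@[simp] lemma eps_021 : eps (0:Fin 3) 2 1 = (-1:F) := rfl
@[simp] lemma eps_022 : eps (0:Fin 3) 2 2 = (0:F) := rfl
@[simp] lemma eps_100 : eps (1:Fin 3) 0 0 = (0:F) := rfl
@[simp] lemma eps_101 : eps (1:Fin 3) 0 1 = (0:F) := rfl
@[simp] lemma eps_102 : eps (1:Fin 3) 0 2 = (-1:F) := rfl
@[simp] lemma eps_110 : eps (1:Fin 3) 1 0 = (0:F) := rfl
@[simp] lemma eps_111 : eps (1:Fin 3) 1 1 = (0:F) := rfl
@[simp] lemma eps_112 : eps (1:Fin 3) 1 2 = (0:F) := rfl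
@[simp] lemma eps_120 : eps (1:Fin 3) 2 0 = (1:F) := rfl
@[simp] lemma eps_121 : eps (1:Fin 3) 2 1 = (0:F) := rfl
@[simp] lemma eps_122 : eps (1:Fin 3) 2 2 = (0:F) := rfl
@[simp] lemma eps_200 : eps (2:Fin 3) 0 0 = (0:F) := rfl
@[simp] lemma eps_201 : eps (2:Fin 3) 0 1 = (1:F) := rfl
@[simp] lemma eps_202 : eps (2:Fin 3) 0 2 = (0:F) := rfl
@[simp] lemma eps_210 : eps (2:Fin 3) 1 0 = (-1:F) := rfl
@[simp] lemma eps_211 : eps (2:Fin 3) 1 1 = (0:F) := rfl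
@[simp] lemma eps_212 : eps (2:Fin 3) 1 2 = (0:F) := rfl
@[simp] lemma eps_220 : eps (2:Fin 3) 2 0 = (0:F) := rfl
@[simp] lemma eps_221 : eps (2:Fin 3) 2 1 = (0:F) := rfl
@[simp] lemma eps_222 : eps (2:Fin 3) 2 2 = (0:F) := rfl
lemma biv_eq (m : Matrix (Fin 3) (Fin 3) F) (i j : Fin 3) :
    biv m i j = C (eps 0 i j * m 0 0 + eps 1 i j * m 1 0 + eps 2 i j * m 2 0) * X 0
      + C (eps 0 i j * m 0 1 + eps 1 i j * m 1 1 + eps 2 i j * m 2 1) * X 1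
      + C (eps 0 i j * m 0 2 + eps 1 i j * m 1 2 + eps 2 i j * m 2 2) * X 2 := by
  simp only [biv, Fin.sum_univ_three, map_add, C_mul]
  ring

set_option maxHeartbeats 2000000 in
lemma key_s17 (lam mu a b c e f g k l m : F) :
  sch3 (biv (!![lam, -1, 0; 1, mu, 0; 0, 0, 0]))
      (biv (!![a, g - m, f + l; g + m, b, e - k; f - l, e + k, c]))
  = C ((f+k*lam) + (f+k*lam)) * X 0 + C ((e+l*mu) + (e+l*mu)) * X 1 + C (c + c) * X 2 := by
  simp only [sch3, Fin.sum_univ_three, biv_eq, Matrix.cons_val', Matrix.cons_val_zero,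
    Matrix.cons_val_one, Matrix.head_cons, Matrix.cons_val_two, Matrix.tail_cons,
    Matrix.empty_val', Matrix.cons_val_fin_one, Matrix.head_fin_const,
    eps_000, eps_001, eps_002, eps_010, eps_011, eps_012, eps_020, eps_021, eps_022,
    eps_100, eps_101, eps_102, eps_110, eps_111, eps_112, eps_120, eps_121, eps_122,
    eps_200, eps_201, eps_202, eps_210, eps_211, eps_212, eps_220, eps_221, eps_222,
    zero_mul, one_mul, neg_mul, mul_zero, mul_one, add_zero, zero_add, map_zero, map_add, map_neg,
    pderiv_C_mul, pderiv_X_self, pderiv_X_of_ne (by decide : (0:Fin 3) ≠ 1),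
    pderiv_X_of_ne (by decide : (0:Fin 3) ≠ 2), pderiv_X_of_ne (by decide : (1:Fin 3) ≠ 0),
    pderiv_X_of_ne (by decide : (1:Fin 3) ≠ 2), pderiv_X_of_ne (by decide : (2:Fin 3) ≠ 0),
    pderiv_X_of_ne (by decide : (2:Fin 3) ≠ 1), neg_zero, neg_neg]
  simp only [Matrix.cons_val_zero, Matrix.cons_val_one, Matrix.head_cons, Matrix.cons_val_two,
    Matrix.tail_cons, Matrix.cons_val', Matrix.empty_val', Matrix.cons_val_fin_one,
    Matrix.head_fin_const, Matrix.of_apply, Fin.isValue, Nat.succ_eq_add_one, Nat.reduceAdd, map_add, map_neg, map_mul, C_1, map_sub, map_zero, C_0,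
    mul_zero, zero_mul, neg_zero, add_zero, zero_add]
  ring


lemma skewMat_eq (k l m : F) : skewMat ![k, l, m] =
    !![0, -m, l; m, 0, -k; -l, k, 0] := by
  ext i j
  fin_cases i <;> fin_cases j <;>
    simp [skewMat, Fin.sum_univ_three, eps]

lemma m1_eq (lam mu : F) : Matrix.diagonal ![lam, mu, 0] + skewMat ![0, 0, 1] =
    !![lam, -1, 0; 1, mu, 0; 0, 0, 0] := by
  rw [skewMat_eq]
  ext i j
  fin_cases i <;> fin_cases j <;>
    simp [Matrix.diagonal_apply, Matrix.vecHead, Matrix.vecTail]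

lemma m2_eq (a b c e f g k l m : F) :
    !![a, g, f; g, b, e; f, e, c] + skewMat ![k, l, m] =
    !![a, g - m, f + l; g + m, b, e - k; f - l, e + k, c] := by
  rw [skewMat_eq]
  ext i j
  fin_cases i <;> fin_cases j <;> simp <;> ring

lemma lin_indep (A B D : F) :
    C A * X 0 + C B * X 1 + C D * X 2 = (0 : MvPolynomial (Fin 3) F) ↔
    A = 0 ∧ B = 0 ∧ D = 0 := by
  constructor
  · intro h
    have h0 := congrArg (coeff (Finsupp.single 0 1)) h
    have h1 := congrArg (coeff (Finsupp.single 1 1)) h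
    have h2 := congrArg (coeff (Finsupp.single 2 1)) h
    simp [coeff_X', Finsupp.single_eq_single_iff] at h0 h1 h2
    exact ⟨h0, h1, h2⟩
  · rintro ⟨rfl, rfl, rfl⟩
    simp

lemma double_eq_zero (hchar : (2 : F) ≠ 0) (x : F) : x + x = 0 ↔ x = 0 := by
  rw [← two_mul, mul_eq_zero]
  simp [hchar]

/-- let c = c_{½(λx₁²+μx₂²)} + c_{α₃} be a non-unimodular Lie structure.
A structure c_F + c_α with F = ½(ax₁²+bx₂²+cx₃²)+ex₂x₃+fx₁x₃+gx₁x₂ and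
α = kα₁+lα₂+mα₃ is a 2-cocycle of c, [c, c_F + c_α] = 0, iff f + kλ = 0, e + lμ = 0
and c = 0; consequently (three independent linear conditions on the 9 parameters
(a,b,c,e,f,g,k,l,m)) dim Z²(c) = 6. -/
theorem stmt17 (hchar : (2 : F) ≠ 0) (lam mu : F) :
    (∀ a b c e f g k l m : F,
      sch3 (biv (Matrix.diagonal ![lam, mu, 0] + skewMat ![0, 0, 1]))
          (biv (!![a, g, f; g, b, e; f, e, c] + skewMat ![k, l, m])) = 0
        ↔ (f + k * lam = 0 ∧ e + l * mu = 0 ∧ c = 0)) ∧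
    Module.finrank F
      (LinearMap.ker
        (Matrix.mulVecLin
          (!![0, 0, 0, 0, 1, 0, lam, 0, 0;
              0, 0, 0, 1, 0, 0, 0, mu, 0;
              0, 0, 1, 0, 0, 0, 0, 0, 0] : Matrix (Fin 3) (Fin 9) F))) = 6 := by
  constructor
  · intro a b c e f g k l m
    rw [m1_eq, m2_eq, key_s17, lin_indep, double_eq_zero hchar, double_eq_zero hchar,
      double_eq_zero hchar]
  · set A : Matrix (Fin 3) (Fin 9) F :=
      !![0, 0, 0, 0, 1, 0, lam, 0, 0;
         0, 0, 0, 1, 0, 0, 0, mu, 0;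
         0, 0, 1, 0, 0, 0, 0, 0, 0] with hA
    have hsurj : Function.Surjective A.mulVecLin := by
      intro v
      refine ⟨![0, 0, v 2, v 1, v 0, 0, 0, 0, 0], ?_⟩
      ext i
      fin_cases i <;>
        simp [hA, Matrix.mulVecLin_apply, Matrix.mulVec, dotProduct,
          Fin.sum_univ_succ]
    have hr : LinearMap.range A.mulVecLin = ⊤ := LinearMap.range_eq_top.mpr hsurj
    have := LinearMap.finrank_range_add_finrank_ker A.mulVecLin
    rw [hr] at this
    simp [Module.finrank_pi] at this
    omega

end
end
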